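/- For 0 ≤ γ < 1, if f is analytic on Ω_γ = {z : |z + γ/(1-γ)| < 1/(1-γ)} with |f| ≤ 1, and f(z) = Σ a_n z^n on the unit disk, then |a_n| ≤ (1 - |a_0|²)/(1+γ) for all n ≥ 1. -/

import Mathlib

open Metric Finset Set FormalMultilinearSeries Filter Topology
open scoped NNReal ENNReal ComplexConjugate

/-!
The Möbius map `φ w = (1 + γ) w / (1 + γ w)` sends the unit disk into `Ω_γ`, so `G = f ∘ φ` is
bounded by `1` on the disk and its Taylor coefficients satisfy Wiener's inequality
`‖b k‖ ≤ 1 - ‖b 0‖ ^ 2` for `k ≠ 0`: averaging `G` over the `k`-th roots of unity produces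
`Σ b (k j) w ^ j`, to which the Schwarz–Pick lemma at `0` applies.

Near `0` we have `f = G ∘ ψ` with `ψ z = z / (1 + γ - γ z)`, whose Taylor coefficients are
nonnegative. Expanding the composition along compositions of `n` and bounding every `b k` with
`k ≠ 0` by `1 - ‖b 0‖ ^ 2` bounds `‖a n‖` by `1 - ‖a 0‖ ^ 2` times the `n`-th coefficient of
`1 / (1 - ψ z) = γ / (1 + γ) + (1 + γ)⁻¹ / (1 - z)`, which is `(1 + γ)⁻¹`.
-/

theorem hasFPowerSeriesOnBall_ofScalars_of_hasSum {g : ℂ → ℂ} {c : ℕ → ℂ} {r : ℝ≥0}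
    (hr : 0 < r) (h : ∀ z ∈ ball (0 : ℂ) r, HasSum (fun n => c n * z ^ n) (g z)) :
    HasFPowerSeriesOnBall g (ofScalars ℂ c) 0 r where
  r_le := by
    refine ENNReal.le_of_forall_nnreal_lt fun s hs => ?_
    have hs : ((s : ℝ) : ℂ) ∈ ball (0 : ℂ) r := by simpa using hs
    refine (ofScalars ℂ c).le_radius_of_tendsto (l := 0) ?_
    simpa using (h _ hs).summable.tendsto_atTop_zero.norm
  r_pos := by simpa using hr
  hasSum {z} hz := by
    rw [Metric.eball_coe] at hz
    simpa [ofScalars_apply_eq, mul_comm] using h z hz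

theorem FormalMultilinearSeries.coeff_comp {𝕜 : Type*} [NontriviallyNormedField 𝕜]
    (q p : FormalMultilinearSeries 𝕜 𝕜 𝕜) (n : ℕ) :
    (q.comp p).coeff n = ∑ c : Composition n, q.coeff c.length * ∏ i, p.coeff (c.blocksFun i) := by
  have happ (c : Composition n) : p.applyComposition c 1 = fun i => p.coeff (c.blocksFun i) := rfl
  simp only [FormalMultilinearSeries.coeff, FormalMultilinearSeries.comp,
    _root_.sum_apply, compAlongComposition_apply]
  refine Finset.sum_congr rfl fun c _ => ?_
  rw [happ, apply_eq_prod_smul_coeff, smul_eq_mul, mul_comm]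
  rfl

theorem FormalMultilinearSeries.norm_coeff_comp_le {𝕜 : Type*} [NontriviallyNormedField 𝕜]
    {q : FormalMultilinearSeries 𝕜 𝕜 𝕜} {M : ℝ} (hq : ∀ k ≠ 0, ‖q.coeff k‖ ≤ M)
    (p : FormalMultilinearSeries 𝕜 𝕜 𝕜) {n : ℕ} (hn : n ≠ 0) :
    ‖(q.comp p).coeff n‖ ≤ M * ∑ c : Composition n, ∏ i, ‖p.coeff (c.blocksFun i)‖ := by
  rw [coeff_comp, Finset.mul_sum]
  refine (norm_sum_le _ _).trans (Finset.sum_le_sum fun c _ => ?_)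
  rw [norm_mul, norm_prod]
  exact mul_le_mul_of_nonneg_right (hq _ (c.length_pos_of_pos (Nat.pos_of_ne_zero hn)).ne')
    (by positivity)

theorem FormalMultilinearSeries.coeff_ofScalars_one_comp {𝕜 : Type*} [RCLike 𝕜]
    {p : FormalMultilinearSeries 𝕜 𝕜 𝕜} (hp : ∀ m, ((‖p.coeff m‖ : ℝ) : 𝕜) = p.coeff m) (n : ℕ) :
    ((ofScalars 𝕜 1).comp p).coeff n =
      ((∑ c : Composition n, ∏ i, ‖p.coeff (c.blocksFun i)‖ : ℝ) : 𝕜) := by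
  simp [coeff_comp, hp]

theorem Complex.norm_sub_lt_norm_one_sub_conj_mul {a u : ℂ} (ha : ‖a‖ < 1) (hu : ‖u‖ < 1) :
    ‖u - a‖ < ‖1 - conj a * u‖ := by
  have key : ‖1 - conj a * u‖ ^ 2 = ‖u - a‖ ^ 2 + (1 - ‖a‖ ^ 2) * (1 - ‖u‖ ^ 2) := by
    simp only [Complex.sq_norm, Complex.normSq_apply, Complex.sub_re, Complex.sub_im,
      Complex.mul_re, Complex.mul_im, Complex.one_re, Complex.one_im, Complex.conj_re,
      Complex.conj_im]
    ring
  have hpos : 0 < (1 - ‖a‖ ^ 2) * (1 - ‖u‖ ^ 2) := by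
    apply mul_pos <;> nlinarith [norm_nonneg a, norm_nonneg u]
  exact lt_of_pow_lt_pow_left₀ 2 (norm_nonneg _) (by linarith)

theorem Complex.norm_deriv_zero_le_one_sub_sq {q : ℂ → ℂ} (hd : DifferentiableOn ℂ q (ball 0 1))
    (hq : MapsTo q (ball 0 1) (ball 0 1)) : ‖deriv q 0‖ ≤ 1 - ‖q 0‖ ^ 2 := by
  set a := q 0
  have ha : ‖a‖ < 1 := by simpa using hq (mem_ball_self one_pos)
  have hden : ∀ u : ℂ, ‖u‖ < 1 → 1 - conj a * u ≠ 0 := fun u hu =>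
    norm_pos_iff.mp ((norm_nonneg _).trans_lt (norm_sub_lt_norm_one_sub_conj_mul ha hu))
  set m : ℂ → ℂ := fun u => (u - a) / (1 - conj a * u)
  have hm : HasDerivAt m (1 - ‖a‖ ^ 2 : ℂ)⁻¹ a := by
    have h := ((hasDerivAt_id' a).sub_const a).div
      (((hasDerivAt_id' a).const_mul (conj a)).const_sub 1) (hden a ha)
    refine h.congr_deriv ?_
    have h1 : (1 : ℂ) - ‖a‖ ^ 2 ≠ 0 := by rw [← Complex.conj_mul']; exact hden a ha
    rw [Complex.conj_mul']
    field_simp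
    ring
  -- The Möbius map `m` moves `q 0` to the origin, so the Schwarz lemma applies to `m ∘ q`.
  have hmq : MapsTo (m ∘ q) (ball 0 1) (ball ((m ∘ q) 0) 1) := by
    intro w hw
    have hw' : ‖q w‖ < 1 := by simpa using hq hw
    simpa [m, a, norm_div, div_lt_one (norm_pos_iff.mpr (hden _ hw'))] using
      norm_sub_lt_norm_one_sub_conj_mul ha hw'
  have hdmq : DifferentiableOn ℂ (m ∘ q) (ball 0 1) := by
    refine DifferentiableOn.div (hd.sub_const a) ((hd.const_mul _).const_sub 1) fun w hw => ?_
    exact hden _ (by simpa using hq hw)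
  have hS := Complex.norm_deriv_le_one_of_mapsTo_ball hdmq
    (hmq.mono_right ball_subset_closedBall) one_pos
  rw [deriv_comp (0 : ℂ) hm.differentiableAt (hd.differentiableAt (ball_mem_nhds 0 one_pos)),
    hm.deriv, norm_mul, norm_inv] at hS
  have hpos : 0 < 1 - ‖a‖ ^ 2 := by nlinarith [norm_nonneg a]
  rw [show ‖(1 - ‖a‖ ^ 2 : ℂ)‖ = 1 - ‖a‖ ^ 2 by norm_cast; exact Real.norm_of_nonneg hpos.le,
    inv_mul_le_iff₀ hpos, mul_one] at hS
  exact hS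

theorem IsPrimitiveRoot.sum_pow_pow_eq_ite {R : Type*} [CommRing R] [IsDomain R] {ζ : R} {n : ℕ}
    (hζ : IsPrimitiveRoot ζ n) (m : ℕ) :
    ∑ j ∈ range n, (ζ ^ j) ^ m = if n ∣ m then (n : R) else 0 := by
  simp_rw [← pow_mul, mul_comm _ m, pow_mul]
  split_ifs with hm
  · simp [(hζ.pow_eq_one_iff_dvd m).mpr hm]
  · have hne : ζ ^ m - 1 ≠ 0 := sub_ne_zero.mpr fun h => hm ((hζ.pow_eq_one_iff_dvd m).mp h)
    have h := mul_geom_sum (ζ ^ m) n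
    rw [← pow_mul, mul_comm m n, pow_mul, hζ.pow_eq_one, one_pow, sub_self] at h
    exact (mul_eq_zero.mp h).resolve_left hne

theorem hasSum_decimation {b : ℕ → ℂ} {F : ℂ → ℂ} {n : ℕ} {ζ z : ℂ} (hn : n ≠ 0)
    (hζ : IsPrimitiveRoot ζ n) (hF : ∀ j, HasSum (fun m => b m * (ζ ^ j * z) ^ m) (F (ζ ^ j * z))) :
    HasSum (fun k => b (n * k) * (z ^ n) ^ k) ((∑ j ∈ range n, F (ζ ^ j * z)) / n) := by
  have hn' : (n : ℂ) ≠ 0 := Nat.cast_ne_zero.mpr hn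
  have havg := (hasSum_sum fun j (_ : j ∈ range n) => hF j).div_const (n : ℂ)
  have hterm : ∀ m, (∑ j ∈ range n, b m * (ζ ^ j * z) ^ m) / n
      = if n ∣ m then b m * z ^ m else 0 := by
    intro m
    simp_rw [mul_pow, ← mul_assoc, mul_comm (b m), mul_assoc, ← Finset.sum_mul,
      hζ.sum_pow_pow_eq_ite m]
    split_ifs <;> simp [hn', mul_comm]
  simp_rw [hterm] at havg
  have hinj : Function.Injective (n * ·) := fun _ _ h => Nat.eq_of_mul_eq_mul_left
    (Nat.pos_of_ne_zero hn) h
  have hzero : ∀ m ∉ Set.range (n * ·), (if n ∣ m then b m * z ^ m else 0) = 0 :=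
    fun m hm => if_neg fun ⟨k, hk⟩ => hm ⟨k, hk.symm⟩
  rw [← hinj.hasSum_iff hzero] at havg
  convert havg using 2 with k
  simp [← pow_mul]

theorem norm_coeff_le_one_sub_sq_of_norm_lt_one {G : ℂ → ℂ} {b : ℕ → ℂ}
    (hG : ∀ z ∈ ball (0 : ℂ) 1, HasSum (fun m => b m * z ^ m) (G z))
    (hlt : ∀ z ∈ ball (0 : ℂ) 1, ‖G z‖ < 1) {n : ℕ} (hn : n ≠ 0) :
    ‖b n‖ ≤ 1 - ‖b 0‖ ^ 2 := by
  obtain ⟨ζ, hζ⟩ : ∃ ζ : ℂ, IsPrimitiveRoot ζ n := ⟨_, Complex.isPrimitiveRoot_exp n hn⟩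
  have hdec : ∀ w ∈ ball (0 : ℂ) 1, ∃ v : ℂ, ‖v‖ < 1 ∧ HasSum (fun k => b (n * k) * w ^ k) v := by
    intro w hw
    obtain ⟨z, rfl⟩ := IsAlgClosed.exists_pow_nat_eq w (Nat.pos_of_ne_zero hn)
    have hz : ‖z‖ < 1 := by
      rw [mem_ball_zero_iff, norm_pow] at hw
      exact (pow_lt_one_iff_of_nonneg (norm_nonneg z) hn).mp hw
    have hmem : ∀ j, ζ ^ j * z ∈ ball (0 : ℂ) 1 := fun j => by
      simpa [norm_mul, norm_pow, hζ.norm'_eq_one hn] using hz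
    refine ⟨_, ?_, hasSum_decimation hn hζ fun j => hG _ (hmem j)⟩
    have hn' : (0 : ℝ) < n := Nat.cast_pos.mpr (Nat.pos_of_ne_zero hn)
    rw [norm_div, Complex.norm_natCast, div_lt_one hn']
    calc ‖∑ j ∈ range n, G (ζ ^ j * z)‖ ≤ ∑ j ∈ range n, ‖G (ζ ^ j * z)‖ := norm_sum_le _ _
      _ < ∑ _j ∈ range n, (1 : ℝ) :=
        sum_lt_sum_of_nonempty (nonempty_range_iff.mpr hn) fun j _ => hlt _ (hmem j)
      _ = n := by simp
  choose! g hg_lt hg using hdec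
  have hg_series := hasFPowerSeriesOnBall_ofScalars_of_hasSum one_pos (r := 1) (by simpa using hg)
  have hgd := hg_series.differentiableOn
  rw [Metric.eball_coe, NNReal.coe_one] at hgd
  have hSP := Complex.norm_deriv_zero_le_one_sub_sq hgd fun w hw =>
    mem_ball_zero_iff.mpr (hg_lt w hw)
  rw [hg_series.hasFPowerSeriesAt.deriv, ← hg_series.hasFPowerSeriesAt.coeff_zero ![]] at hSP
  simpa using hSP

theorem norm_coeff_le_one_sub_sq {G : ℂ → ℂ} {b : ℕ → ℂ}
    (hG : ∀ z ∈ ball (0 : ℂ) 1, HasSum (fun m => b m * z ^ m) (G z))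
    (hle : ∀ z ∈ ball (0 : ℂ) 1, ‖G z‖ ≤ 1) {n : ℕ} (hn : n ≠ 0) :
    ‖b n‖ ≤ 1 - ‖b 0‖ ^ 2 := by
  have hscaled : ∀ ρ ∈ Ioo (0 : ℝ) 1, ρ * ‖b n‖ + ρ ^ 2 * ‖b 0‖ ^ 2 ≤ 1 := by
    rintro ρ ⟨hρ0, hρ1⟩
    have h := norm_coeff_le_one_sub_sq_of_norm_lt_one (G := fun z => ρ * G z)
      (b := fun m => ρ * b m) (fun z hz => by simpa [mul_assoc] using (hG z hz).mul_left (ρ : ℂ))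
      (fun z hz => by
        rw [norm_mul, Complex.norm_real, Real.norm_of_nonneg hρ0.le]
        nlinarith [hle z hz, norm_nonneg (G z)]) hn
    rw [norm_mul, norm_mul, Complex.norm_real, Real.norm_of_nonneg hρ0.le] at h
    linarith
  have hlim : Tendsto (fun ρ : ℝ => ρ * ‖b n‖ + ρ ^ 2 * ‖b 0‖ ^ 2) (𝓝[<] 1)
      (𝓝 (‖b n‖ + ‖b 0‖ ^ 2)) := by
    have : Continuous (fun ρ : ℝ => ρ * ‖b n‖ + ρ ^ 2 * ‖b 0‖ ^ 2) := by fun_prop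
    simpa using this.tendsto 1 |>.mono_left nhdsWithin_le_nhds
  have := le_of_tendsto hlim (eventually_of_mem (Ioo_mem_nhdsLT zero_lt_one) hscaled)
  linarith

noncomputable def diskToOmega (γ : ℝ) (w : ℂ) : ℂ := (1 + γ) * w / (1 + γ * w)

noncomputable def omegaToDisk (γ : ℝ) (z : ℂ) : ℂ := z / (1 + γ - γ * z)

noncomputable def omegaToDiskCoeff (γ : ℝ) (m : ℕ) : ℝ :=
  if m = 0 then 0 else (1 + γ)⁻¹ ^ m * γ ^ (m - 1)

noncomputable def omegaToDiskSeries (γ : ℝ) : FormalMultilinearSeries ℂ ℂ ℂ :=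
  ofScalars ℂ fun m => (omegaToDiskCoeff γ m : ℂ)

section

variable {γ : ℝ}

theorem one_add_mul_ne_zero_of_abs_lt_one (hγ : |γ| < 1) {w : ℂ} (hw : w ∈ ball (0 : ℂ) 1) :
    1 + γ * w ≠ 0 := by
  have : ‖(γ : ℂ) * w‖ < 1 := by
    rw [norm_mul, Complex.norm_real, Real.norm_eq_abs]
    exact mul_lt_one_of_nonneg_of_lt_one_left (abs_nonneg γ) hγ (mem_ball_zero_iff.mp hw).le
  intro h
  rw [add_eq_zero_iff_eq_neg'.mp h] at this
  simp at this

theorem differentiableOn_diskToOmega (hγ : |γ| < 1) :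
    DifferentiableOn ℂ (diskToOmega γ) (ball 0 1) :=
  DifferentiableOn.div (by fun_prop) (by fun_prop) fun _ hw =>
    one_add_mul_ne_zero_of_abs_lt_one hγ hw

theorem mapsTo_diskToOmega (hγ : |γ| < 1) :
    MapsTo (diskToOmega γ) (ball 0 1) {z : ℂ | ‖z + γ / (1 - γ)‖ < 1 / (1 - γ)} := by
  intro w hw
  have hD := one_add_mul_ne_zero_of_abs_lt_one hγ hw
  have h1γ : 0 < 1 - γ := by linarith [le_abs_self γ]
  have h1γ' : (1 : ℂ) - γ ≠ 0 := by exact_mod_cast h1γ.ne'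
  have key : diskToOmega γ w + γ / (1 - γ) = (w + γ) / ((1 - γ : ℝ) * (1 + γ * w)) := by
    unfold diskToOmega
    push_cast
    field_simp
    ring
  have hlt : ‖w + γ‖ < ‖1 + γ * w‖ := by
    simpa using Complex.norm_sub_lt_norm_one_sub_conj_mul (a := ((-γ : ℝ) : ℂ))
      (by rwa [Complex.norm_real, Real.norm_eq_abs, abs_neg]) (mem_ball_zero_iff.mp hw)
  rw [mem_ofPred_eq, key, norm_div, norm_mul, Complex.norm_real, Real.norm_of_nonneg h1γ.le,
    div_lt_div_iff₀ (by positivity [norm_pos_iff.mpr hD]) h1γ]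
  nlinarith

theorem one_add_sub_mul_ne_zero (hγ : 0 ≤ γ) {z : ℂ} (hz : z ∈ ball (0 : ℂ) 1) :
    1 + γ - γ * z ≠ 0 := by
  have : ‖(γ : ℂ) * z‖ < 1 + γ := by
    rw [norm_mul, Complex.norm_real, Real.norm_of_nonneg hγ]
    nlinarith [mem_ball_zero_iff.mp hz]
  intro h
  rw [← sub_eq_zero.mp h] at this
  have : ‖(1 : ℂ) + γ‖ = 1 + γ := by exact_mod_cast Real.norm_of_nonneg (by linarith : 0 ≤ 1 + γ)
  linarith

theorem diskToOmega_omegaToDisk (hγ : 0 ≤ γ) {z : ℂ} (hz : z ∈ ball (0 : ℂ) 1) :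
    diskToOmega γ (omegaToDisk γ z) = z := by
  have hD := one_add_sub_mul_ne_zero hγ hz
  have h1γ : (1 : ℂ) + γ ≠ 0 := by exact_mod_cast (by linarith : (1 : ℝ) + γ ≠ 0)
  have hden : 1 + γ * (z / (1 + γ - γ * z)) = (1 + γ) / (1 + γ - γ * z) := by
    field_simp
    ring
  unfold diskToOmega omegaToDisk
  rw [hden]
  field_simp

theorem hasFPowerSeriesOnBall_omegaToDisk (hγ : 0 ≤ γ) :
    HasFPowerSeriesOnBall (omegaToDisk γ) (omegaToDiskSeries γ) 0 1 := by
  refine hasFPowerSeriesOnBall_ofScalars_of_hasSum one_pos fun z hz => ?_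
  have hz : ‖z‖ < 1 := by simpa using hz
  have h1γ : (0 : ℝ) < 1 + γ := by linarith
  set κ : ℂ := (((1 + γ)⁻¹ : ℝ) : ℂ)
  have hκγ : ‖κ * γ * z‖ < 1 := by
    have hκγ_le : (1 + γ)⁻¹ * γ ≤ 1 := by
      rw [inv_mul_le_iff₀ h1γ]
      linarith
    rw [norm_mul, norm_mul, Complex.norm_real, Complex.norm_real, Real.norm_of_nonneg hγ,
      Real.norm_of_nonneg (inv_nonneg.mpr h1γ.le)]
    nlinarith [norm_nonneg z]
  have hD := one_add_sub_mul_ne_zero hγ (mem_ball_zero_iff.mpr hz)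
  have h1 : (1 : ℂ) - κ * γ * z ≠ 0 := fun h => by
    rw [← sub_eq_zero.mp h, norm_one] at hκγ
    exact lt_irrefl 1 hκγ
  refine (hasSum_nat_add_iff' 1).mp ?_
  have hval : omegaToDisk γ z - ∑ i ∈ range 1, (omegaToDiskCoeff γ i : ℂ) * z ^ i
      = κ * z * (1 - κ * γ * z)⁻¹ := by
    have h1γC : (1 : ℂ) + γ ≠ 0 := by exact_mod_cast h1γ.ne'
    simp [omegaToDisk, omegaToDiskCoeff, κ]
    field_simp
  rw [hval]
  have hterm : (fun j => (omegaToDiskCoeff γ (j + 1) : ℂ) * z ^ (j + 1))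
      = fun j => κ * z * (κ * γ * z) ^ j := by
    funext j
    rw [omegaToDiskCoeff, if_neg (Nat.succ_ne_zero j), Nat.add_sub_cancel]
    simp only [κ]
    push_cast
    ring
  rw [hterm]
  exact (hasSum_geometric_of_norm_lt_one hκγ).mul_left (κ * z)

theorem sum_prod_coeff_omegaToDiskSeries (hγ : 0 ≤ γ) {n : ℕ} (hn : n ≠ 0) :
    ∑ c : Composition n, ∏ i, ‖(omegaToDiskSeries γ).coeff (c.blocksFun i)‖ = (1 + γ)⁻¹ := by
  have hp : ∀ m, ((‖(omegaToDiskSeries γ).coeff m‖ : ℝ) : ℂ) = (omegaToDiskSeries γ).coeff m := by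
    intro m
    rw [omegaToDiskSeries, coeff_ofScalars, Complex.norm_real,
      Real.norm_of_nonneg (by unfold omegaToDiskCoeff; positivity)]
  have hgeom := Complex.one_div_one_sub_hasFPowerSeriesOnBall_zero
  have hcomp := (show HasFPowerSeriesAt (fun w : ℂ => 1 / (1 - w)) (ofScalars ℂ 1)
    (omegaToDisk γ 0) by simpa [omegaToDisk] using hgeom.hasFPowerSeriesAt).comp
    (hasFPowerSeriesOnBall_omegaToDisk hγ).hasFPowerSeriesAt
  set κ : ℂ := (((1 + γ)⁻¹ : ℝ) : ℂ)
  -- The sum is the `n`-th coefficient of `1 / (1 - omegaToDisk γ z) = (1 - κ) + κ / (1 - z)`.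
  have hE := (hasFPowerSeriesOnBall_const (c := 1 - κ) (e := (0 : ℂ))).hasFPowerSeriesAt.add
    (hgeom.const_smul (c := κ)).hasFPowerSeriesAt
  have heq : (fun w : ℂ => 1 / (1 - w)) ∘ omegaToDisk γ =ᶠ[𝓝 0]
      (fun _ => 1 - κ) + κ • fun z => 1 / (1 - z) := by
    filter_upwards [ball_mem_nhds (0 : ℂ) one_pos] with z hz
    have hD := one_add_sub_mul_ne_zero hγ hz
    have h1z : (1 : ℂ) - z ≠ 0 := sub_ne_zero.mpr fun h => by simp [← h] at hz
    have h1γ : (1 : ℂ) + γ ≠ 0 := by exact_mod_cast (by linarith : (1 : ℝ) + γ ≠ 0)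
    have hψ : 1 - omegaToDisk γ z = (1 + γ) * (1 - z) / (1 + γ - γ * z) := by
      rw [omegaToDisk, one_sub_div hD]
      ring
    simp only [Function.comp_apply, hψ, κ, Pi.add_apply, Pi.smul_apply, smul_eq_mul]
    push_cast
    field_simp
    ring
  have hcoeff := congrArg (coeff · n) ((hcomp.congr heq).eq_formalMultilinearSeries hE)
  have hE_coeff : (constFormalMultilinearSeries ℂ ℂ (1 - κ) + κ • ofScalars ℂ 1).coeff n = κ := by
    change (constFormalMultilinearSeries ℂ ℂ (1 - κ)).coeff n + κ * (ofScalars ℂ 1).coeff n = κ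
    rw [FormalMultilinearSeries.coeff, constFormalMultilinearSeries_apply_of_nonzero hn,
      coeff_ofScalars]
    simp
  simp only [coeff_ofScalars_one_comp hp, hE_coeff, κ] at hcoeff
  exact Complex.ofReal_injective hcoeff

theorem HasFPowerSeriesAt.comp_omegaToDisk (hγ : 0 ≤ γ) {g : ℂ → ℂ}
    {q : FormalMultilinearSeries ℂ ℂ ℂ} (hg : HasFPowerSeriesAt g q 0) :
    HasFPowerSeriesAt (g ∘ omegaToDisk γ) (q.comp (omegaToDiskSeries γ)) 0 :=
  (show HasFPowerSeriesAt g q (omegaToDisk γ 0) by simpa [omegaToDisk] using hg).comp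
    (hasFPowerSeriesOnBall_omegaToDisk hγ).hasFPowerSeriesAt

end

theorem coeff_bound_omega_gamma (γ : ℝ) (hγ : 0 ≤ γ) (hγ1 : γ < 1)
    (f : ℂ → ℂ) (a : ℕ → ℂ)
    (hf : AnalyticOn ℂ f {z : ℂ | ‖z + γ / (1 - γ)‖ < 1 / (1 - γ)})
    (hb : ∀ z ∈ {z : ℂ | ‖z + γ / (1 - γ)‖ < 1 / (1 - γ)}, ‖f z‖ ≤ 1)
    (ha : ∀ z ∈ Metric.ball (0 : ℂ) 1, HasSum (fun n => a n * z ^ n) (f z)) :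
    ∀ n : ℕ, 1 ≤ n → ‖a n‖ ≤ (1 - ‖a 0‖ ^ 2) / (1 + γ) := by
  intro n hn
  have hγabs : |γ| < 1 := abs_lt.mpr ⟨by linarith, hγ1⟩
  set G := f ∘ diskToOmega γ
  have hGd : DifferentiableOn ℂ G (ball 0 1) :=
    hf.differentiableOn.comp (differentiableOn_diskToOmega hγabs) (mapsTo_diskToOmega hγabs)
  set b : ℕ → ℂ := fun m => (m.factorial : ℂ)⁻¹ * iteratedDeriv m G 0
  have hGsum : ∀ z ∈ ball (0 : ℂ) 1, HasSum (fun m => b m * z ^ m) (G z) := fun z hz => by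
    simpa [b, mul_assoc, mul_comm, mul_left_comm] using Complex.hasSum_taylorSeries_on_ball hGd hz
  have hG := (hasFPowerSeriesOnBall_ofScalars_of_hasSum one_pos
    (by simpa using hGsum)).hasFPowerSeriesAt
  have hfG : G ∘ omegaToDisk γ =ᶠ[𝓝 0] f := by
    filter_upwards [ball_mem_nhds (0 : ℂ) one_pos] with z hz
    simp [G, diskToOmega_omegaToDisk hγ hz]
  have ha_series := (hasFPowerSeriesOnBall_ofScalars_of_hasSum one_pos
    (by simpa using ha)).hasFPowerSeriesAt
  have hab := ha_series.eq_formalMultilinearSeries ((hG.comp_omegaToDisk hγ).congr hfG)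
  have ha0 : a 0 = b 0 := by
    have h1 := ha_series.coeff_zero ![]
    have h2 := hG.coeff_zero ![]
    simp [G, diskToOmega] at h1 h2
    rw [h1, h2]
  have hbk : ∀ k ≠ 0, ‖(ofScalars ℂ b).coeff k‖ ≤ 1 - ‖b 0‖ ^ 2 := fun k hk => by
    rw [coeff_ofScalars]
    exact norm_coeff_le_one_sub_sq hGsum (fun z hz => hb _ (mapsTo_diskToOmega hγabs hz)) hk
  calc ‖a n‖ = ‖((ofScalars ℂ b).comp (omegaToDiskSeries γ)).coeff n‖ := by
        rw [← hab, coeff_ofScalars]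
    _ ≤ (1 - ‖b 0‖ ^ 2) *
          ∑ c : Composition n, ∏ i, ‖(omegaToDiskSeries γ).coeff (c.blocksFun i)‖ :=
        norm_coeff_comp_le hbk _ (by omega)
    _ = (1 - ‖a 0‖ ^ 2) / (1 + γ) := by
        rw [sum_prod_coeff_omegaToDiskSeries hγ (by omega), ha0, div_eq_mul_inv]
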